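/- Let H be a real symmetric n×n matrix strictly supported on the connected graph G, let λ ∈ ℝ and ψ ∈ ℝ^V satisfy Hψ = λψ with dim ker(H − λI) = 1 and ψ_r ≠ 0 for every vertex r, and let C be a frame for the cycle space Z. Consider the symmetric block matrix M = [[Φ, C],[C^⊤, 0_β]] of size (|E|+β)×(|E|+β). Then n_-(M) = n_-(H − λI) + β. -/

import Mathlib

open Matrix

/-- A finite simple graph with a chosen orientation of each edge:
`E` is the edge index type, each edge `e` goes from `src e` to `tgt e`. -/
structure OrientedGraph (V E : Type*) where
  src : E → V
  tgt : E → V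
  loopless : ∀ e, src e ≠ tgt e
  edgeInj : ∀ e f, (src e = src f ∧ tgt e = tgt f) ∨ (src e = tgt f ∧ tgt e = src f) → e = f

/-- The underlying simple graph: `r` and `s` are adjacent iff some oriented edge joins them. -/
def OrientedGraph.toSimpleGraph {V E : Type*} (G : OrientedGraph V E) : SimpleGraph V where
  Adj r s := ∃ e, (G.src e = r ∧ G.tgt e = s) ∨ (G.src e = s ∧ G.tgt e = r)
  symm := by
    constructor
    intro r s h
    obtain ⟨e, h⟩ := h
    exact ⟨e, h.symm⟩
  loopless := by
    constructor
    intro r h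
    obtain ⟨e, h⟩ := h
    rcases h with ⟨h1, h2⟩ | ⟨h1, h2⟩ <;> exact G.loopless e (h1.trans h2.symm)

/-- `H` is strictly supported on `G`: off-diagonal entries are nonzero exactly on edges. -/
def OrientedGraph.StrictSupport {V E : Type*} (G : OrientedGraph V E)
    (H : Matrix V V ℝ) : Prop :=
  ∀ r s, r ≠ s → (H r s ≠ 0 ↔ G.toSimpleGraph.Adj r s)

/-- `H` is supported on `G`: off-diagonal nonzero entries occur only on edges. -/
def OrientedGraph.Support {V E : Type*} (G : OrientedGraph V E)
    (H : Matrix V V ℝ) : Prop :=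
  ∀ r s, r ≠ s → H r s ≠ 0 → G.toSimpleGraph.Adj r s

/-- The coboundary map `d : ℝ^V → ℝ^E`, `(dθ)_{(r→s)} = θ_s - θ_r`, as an `E × V` matrix. -/
def OrientedGraph.cob {V E : Type*} [DecidableEq V] (G : OrientedGraph V E) :
    Matrix E V ℝ :=
  Matrix.of fun e v => (if G.tgt e = v then (1 : ℝ) else 0) - (if G.src e = v then (1 : ℝ) else 0)

/-- The cycle space `Z = ker dᵀ ⊆ ℝ^E`. -/
noncomputable def OrientedGraph.cycleSpace {V E : Type*} [Fintype V] [Fintype E]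
    [DecidableEq V] (G : OrientedGraph V E) : Submodule ℝ (E → ℝ) :=
  LinearMap.ker (G.cob)ᵀ.mulVecLin

/-- The diagonal matrix `Φ` on `ℝ^E` with entries `Φ_{(r→s)} = -ψ_r H_{rs} ψ_s`. -/
noncomputable def PhiMat {V E : Type*} [DecidableEq E] (G : OrientedGraph V E)
    (H : Matrix V V ℝ) (ψ : V → ℝ) : Matrix E E ℝ :=
  Matrix.diagonal fun e => -(ψ (G.src e) * H (G.src e) (G.tgt e) * ψ (G.tgt e))

/-- The nodal count `ν(ψ,H) = #{(r→s) ∈ E : ψ_r H_{rs} ψ_s > 0}`. -/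
noncomputable def nodalCount {V E : Type*} (G : OrientedGraph V E)
    (H : Matrix V V ℝ) (ψ : V → ℝ) : ℕ :=
  Nat.card {e : E // 0 < ψ (G.src e) * H (G.src e) (G.tgt e) * ψ (G.tgt e)}

/-- `C` is a frame for the cycle space: its columns form a basis of `Z`. -/
def IsFrame {V E : Type*} [Fintype V] [Fintype E] [DecidableEq V]
    (G : OrientedGraph V E) {β : ℕ} (C : Matrix E (Fin β) ℝ) : Prop :=
  LinearMap.ker C.mulVecLin = ⊥ ∧ LinearMap.range C.mulVecLin = G.cycleSpace

/-- `n₋(A)`: the number of negative eigenvalues (with multiplicity) of a hermitian matrix. -/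
noncomputable def negEig {𝕜 : Type*} [RCLike 𝕜] {m : Type*} [Fintype m] [DecidableEq m]
    (A : Matrix m m 𝕜) : ℕ :=
  if h : A.IsHermitian then Nat.card {i // h.eigenvalues i < 0} else 0

/-- `n₊(A)`: the number of positive eigenvalues (with multiplicity) of a hermitian matrix. -/
noncomputable def posEig {𝕜 : Type*} [RCLike 𝕜] {m : Type*} [Fintype m] [DecidableEq m]
    (A : Matrix m m 𝕜) : ℕ :=
  if h : A.IsHermitian then Nat.card {i // 0 < h.eigenvalues i} else 0

/-- `n₀(A)`: the number of zero eigenvalues of a hermitian matrix, i.e. `dim ker A`. -/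
noncomputable def zeroEig {𝕜 : Type*} [RCLike 𝕜] {m : Type*} [Fintype m] [DecidableEq m]
    (A : Matrix m m 𝕜) : ℕ :=
  Module.finrank 𝕜 (LinearMap.ker A.mulVecLin)

/-- `n₋([A]_W)`: the Morse index (number of negative eigenvalues) of the compression of
a hermitian matrix `A` to the subspace `W`, i.e. the maximal dimension of a subspace of `W`
on which the hermitian form of `A` is negative definite. -/
noncomputable def negIndexOn {𝕜 : Type*} [RCLike 𝕜] {m : Type*} [Fintype m]
    (A : Matrix m m 𝕜) (W : Submodule 𝕜 (m → 𝕜)) : ℕ :=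
  sSup {k : ℕ | ∃ U : Submodule 𝕜 (m → 𝕜), U ≤ W ∧ Module.finrank 𝕜 U = k ∧
    ∀ x ∈ U, x ≠ 0 → RCLike.re (star x ⬝ᵥ A.mulVec x) < 0}

/-- `n₊([A]_W)`: the number of positive eigenvalues of the compression of a hermitian
matrix `A` to the subspace `W`. -/
noncomputable def posIndexOn {𝕜 : Type*} [RCLike 𝕜] {m : Type*} [Fintype m]
    (A : Matrix m m 𝕜) (W : Submodule 𝕜 (m → 𝕜)) : ℕ :=
  sSup {k : ℕ | ∃ U : Submodule 𝕜 (m → 𝕜), U ≤ W ∧ Module.finrank 𝕜 U = k ∧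
    ∀ x ∈ U, x ≠ 0 → 0 < RCLike.re (star x ⬝ᵥ A.mulVec x)}

/-- The linear functional `x ↦ v ⬝ᵥ x`. -/
noncomputable def dotLeft {𝕜 : Type*} [RCLike 𝕜] {m : Type*} [Fintype m] (v : m → 𝕜) :
    (m → 𝕜) →ₗ[𝕜] 𝕜 where
  toFun x := v ⬝ᵥ x
  map_add' x y := by simp [dotProduct_add]
  map_smul' c x := by simp [dotProduct_smul]

/-- `n₀([A]_W)`: the dimension of the kernel of the compression of `A` to `W`,
i.e. of `{x ∈ W : Ax ⊥ W}`. -/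
noncomputable def zeroIndexOn {𝕜 : Type*} [RCLike 𝕜] {m : Type*} [Fintype m]
    (A : Matrix m m 𝕜) (W : Submodule 𝕜 (m → 𝕜)) : ℕ :=
  Module.finrank 𝕜
    ↥(W ⊓ ⨅ y : W, LinearMap.ker ((dotLeft (star (y : m → 𝕜))).comp A.mulVecLin))

/-- Extension of `α ∈ ℝ^E` to an antisymmetric function on pairs of vertices:
`α_{rs} = α_e` if `e = (r→s) ∈ E`, `α_{rs} = -α_e` if `e = (s→r) ∈ E`, and `0` otherwise. -/
noncomputable def alphaExt {V E : Type*} [Fintype E] [DecidableEq V]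
    (G : OrientedGraph V E) (α : E → ℝ) (r s : V) : ℝ :=
  ∑ e : E, ((if G.src e = r ∧ G.tgt e = s then α e else 0) -
            (if G.src e = s ∧ G.tgt e = r then α e else 0))

/-- The phase-perturbed matrix `H_α` with `(H_α)_{rs} = e^{iα_{rs}} H_{rs}` for `r ≠ s`. -/
noncomputable def phaseMat {V E : Type*} [Fintype E] [DecidableEq V]
    (G : OrientedGraph V E) (H : Matrix V V ℝ) (α : E → ℝ) : Matrix V V ℂ :=
  Matrix.of fun r s =>
    if r = s then (H r r : ℂ)
    else Complex.exp (Complex.I * (alphaExt G α r s : ℂ)) * (H r s : ℂ)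

/-!
Write `B = H - λ` and `K = d ∘ diag(ψ)⁻¹`. Because `Bψ = 0`, the ground-state identity
`(ψθ)ᵀ B (ψθ) = -½ Σ_{r,s} B_rs ψ_r ψ_s (θ_r - θ_s)²` only has edge terms and equals
`(dθ)ᵀ Φ (dθ)`, so the form of `Φ` pulled back along `K` is the form of `B`. Since `Cᵀ K = 0` and `CᵀC` is
invertible, the map `(x, w) ↦ (Kx + Cw, -(CᵀC)⁻¹CᵀΦ(Kx + Cw/2) - w)` turns the form of `M` into
`xᵀBx - 2|Cw|²`; it lifts every subspace on which `B` is negative (positive) definite to one of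
dimension `β` more on which `M` is. Hence `n₋(M) ≥ n₋(B) + β` and `n₊(M) ≥ n₊(B) + β`, and
both are equalities by counting: `n₋(M) + n₊(M) ≤ |E| + β`, while `n₋(B) + n₊(B) = |V| - 1`
(the eigenvalue is simple) and `|E| = |V| - 1 + β` (the graph is connected).
-/

open Module

namespace Matrix.IsHermitian
variable {m : Type*} [Fintype m] [DecidableEq m] {A : Matrix m m ℝ} (hA : A.IsHermitian)

theorem eq_sum_eigenvectorBasis (x : m → ℝ) :
    x = ∑ i, (⇑(hA.eigenvectorBasis i) ⬝ᵥ x) • ⇑(hA.eigenvectorBasis i) := by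
  have := congrArg WithLp.ofLp (hA.eigenvectorBasis.sum_repr' (WithLp.toLp 2 x))
  simp only [WithLp.ofLp_sum, WithLp.ofLp_smul, EuclideanSpace.inner_eq_star_dotProduct] at this
  simpa [dotProduct_comm] using this.symm

theorem exists_eigenvectorBasis_dotProduct_ne_zero {x : m → ℝ} (hx : x ≠ 0) :
    ∃ i, ⇑(hA.eigenvectorBasis i) ⬝ᵥ x ≠ 0 := by
  by_contra! h
  exact hx (by simpa [h] using hA.eq_sum_eigenvectorBasis x)

theorem dotProduct_mulVec_eq_sum (x : m → ℝ) :
    x ⬝ᵥ (A *ᵥ x) = ∑ i, hA.eigenvalues i * (⇑(hA.eigenvectorBasis i) ⬝ᵥ x) ^ 2 := by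
  have hAx : A *ᵥ x = ∑ i, ((⇑(hA.eigenvectorBasis i) ⬝ᵥ x) * hA.eigenvalues i) •
      ⇑(hA.eigenvectorBasis i) := by
    conv_lhs => rw [hA.eq_sum_eigenvectorBasis x]
    simp only [mulVec_sum, mulVec_smul, hA.mulVec_eigenvectorBasis, smul_smul]
  simp only [hAx, dotProduct_sum, dotProduct_smul, smul_eq_mul]
  refine Finset.sum_congr rfl fun i _ => ?_
  rw [dotProduct_comm]; ring

noncomputable def eigenvectorSpan (p : ℝ → Prop) : Submodule ℝ (m → ℝ) :=
  Submodule.span ℝ (Set.range fun i : {i // p (hA.eigenvalues i)} => ⇑(hA.eigenvectorBasis i))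

theorem finrank_eigenvectorSpan (p : ℝ → Prop) [DecidablePred p] :
    finrank ℝ (hA.eigenvectorSpan p) = Fintype.card {i // p (hA.eigenvalues i)} := by
  refine finrank_span_eq_card ?_
  exact (hA.eigenvectorBasis.orthonormal.linearIndependent.map' _
    (WithLp.linearEquiv 2 ℝ (m → ℝ)).ker).comp Subtype.val Subtype.val_injective

theorem eigenvectorBasis_dotProduct_eq_zero {p : ℝ → Prop} {x : m → ℝ}
    (hx : x ∈ hA.eigenvectorSpan p) {i : m} (hi : ¬ p (hA.eigenvalues i)) :
    ⇑(hA.eigenvectorBasis i) ⬝ᵥ x = 0 := by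
  induction hx using Submodule.span_induction with
  | mem _ h =>
    obtain ⟨j, rfl⟩ := h
    have hij : i ≠ j := fun h => hi (h ▸ j.2)
    simpa [EuclideanSpace.inner_eq_star_dotProduct] using
      hA.eigenvectorBasis.orthonormal.inner_eq_zero hij.symm
  | zero => simp
  | add _ _ _ _ hx hy => simp [dotProduct_add, hx, hy]
  | smul _ _ _ hx => simp [dotProduct_smul, hx]

theorem dotProduct_mulVec_eq_sum_filter {p : ℝ → Prop} [DecidablePred p] {x : m → ℝ}
    (hx : x ∈ hA.eigenvectorSpan p) :
    x ⬝ᵥ (A *ᵥ x) = ∑ i with p (hA.eigenvalues i),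
      hA.eigenvalues i * (⇑(hA.eigenvectorBasis i) ⬝ᵥ x) ^ 2 := by
  rw [Finset.sum_filter_of_ne fun i _ h => ?_, hA.dotProduct_mulVec_eq_sum]
  by_contra hi
  simp [hA.eigenvectorBasis_dotProduct_eq_zero hx hi] at h

theorem exists_mem_eigenvectorSpan_dotProduct_ne_zero {p : ℝ → Prop} {x : m → ℝ}
    (hx : x ∈ hA.eigenvectorSpan p) (hx0 : x ≠ 0) :
    ∃ i, p (hA.eigenvalues i) ∧ ⇑(hA.eigenvectorBasis i) ⬝ᵥ x ≠ 0 := by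
  obtain ⟨i, hi⟩ := hA.exists_eigenvectorBasis_dotProduct_ne_zero hx0
  exact ⟨i, by_contra fun h => hi (hA.eigenvectorBasis_dotProduct_eq_zero hx h), hi⟩

theorem dotProduct_mulVec_neg {p : ℝ → Prop} (hp : ∀ t, p t → t < 0) {x : m → ℝ}
    (hx : x ∈ hA.eigenvectorSpan p) (hx0 : x ≠ 0) : x ⬝ᵥ (A *ᵥ x) < 0 := by
  classical
  obtain ⟨i, hpi, hi⟩ := hA.exists_mem_eigenvectorSpan_dotProduct_ne_zero hx hx0
  rw [hA.dotProduct_mulVec_eq_sum_filter hx]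
  refine Finset.sum_neg' (fun j hj => ?_) ⟨i, by simpa using hpi, ?_⟩
  · exact mul_nonpos_of_nonpos_of_nonneg (hp _ (Finset.mem_filter.mp hj).2).le (sq_nonneg _)
  · exact mul_neg_of_neg_of_pos (hp _ hpi) (by positivity)

theorem dotProduct_mulVec_pos {p : ℝ → Prop} (hp : ∀ t, p t → 0 < t) {x : m → ℝ}
    (hx : x ∈ hA.eigenvectorSpan p) (hx0 : x ≠ 0) : 0 < x ⬝ᵥ (A *ᵥ x) := by
  classical
  obtain ⟨i, hpi, hi⟩ := hA.exists_mem_eigenvectorSpan_dotProduct_ne_zero hx hx0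
  rw [hA.dotProduct_mulVec_eq_sum_filter hx]
  refine Finset.sum_pos' (fun j hj => ?_) ⟨i, by simpa using hpi, ?_⟩
  · exact mul_nonneg (hp _ (Finset.mem_filter.mp hj).2).le (sq_nonneg _)
  · exact mul_pos (hp _ hpi) (by positivity)

theorem dotProduct_mulVec_nonneg {p : ℝ → Prop} (hp : ∀ t, p t → 0 ≤ t) {x : m → ℝ}
    (hx : x ∈ hA.eigenvectorSpan p) : 0 ≤ x ⬝ᵥ (A *ᵥ x) := by
  classical
  rw [hA.dotProduct_mulVec_eq_sum_filter hx]
  exact Finset.sum_nonneg fun j hj => mul_nonneg (hp _ (Finset.mem_filter.mp hj).2) (sq_nonneg _)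

theorem dotProduct_mulVec_nonpos {p : ℝ → Prop} (hp : ∀ t, p t → t ≤ 0) {x : m → ℝ}
    (hx : x ∈ hA.eigenvectorSpan p) : x ⬝ᵥ (A *ᵥ x) ≤ 0 := by
  classical
  rw [hA.dotProduct_mulVec_eq_sum_filter hx]
  exact Finset.sum_nonpos fun j hj =>
    mul_nonpos_of_nonpos_of_nonneg (hp _ (Finset.mem_filter.mp hj).2) (sq_nonneg _)

end Matrix.IsHermitian

namespace Matrix
variable {m : Type*} [Fintype m]

theorem finrank_add_finrank_le_of_neg_of_nonneg (A : Matrix m m ℝ) {U W : Submodule ℝ (m → ℝ)}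
    (hU : ∀ x ∈ U, x ≠ 0 → x ⬝ᵥ (A *ᵥ x) < 0) (hW : ∀ x ∈ W, 0 ≤ x ⬝ᵥ (A *ᵥ x)) :
    finrank ℝ U + finrank ℝ W ≤ Fintype.card m := by
  have hUW : Disjoint U W := by
    refine Submodule.disjoint_def.mpr fun x hxU hxW => by_contra fun hx => ?_
    exact (hU x hxU hx).not_ge (hW x hxW)
  simpa using Submodule.finrank_add_finrank_le_of_disjoint hUW

namespace IsHermitian
variable [DecidableEq m] {A : Matrix m m ℝ} (hA : A.IsHermitian)
include hA

theorem negEig_eq : negEig A = Fintype.card {i // hA.eigenvalues i < 0} := by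
  rw [negEig, dif_pos hA, Nat.card_eq_fintype_card]

theorem posEig_eq : posEig A = Fintype.card {i // 0 < hA.eigenvalues i} := by
  rw [posEig, dif_pos hA, Nat.card_eq_fintype_card]

theorem finrank_le_negEig {U : Submodule ℝ (m → ℝ)}
    (hU : ∀ x ∈ U, x ≠ 0 → x ⬝ᵥ (A *ᵥ x) < 0) : finrank ℝ U ≤ negEig A := by
  have h := A.finrank_add_finrank_le_of_neg_of_nonneg hU
    fun _ => hA.dotProduct_mulVec_nonneg (p := fun t => ¬ t < 0) fun _ => le_of_not_gt
  rw [hA.finrank_eigenvectorSpan, Fintype.card_subtype_compl] at h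
  have := Fintype.card_subtype_le fun i => hA.eigenvalues i < 0
  rw [hA.negEig_eq]
  omega

theorem finrank_le_posEig {U : Submodule ℝ (m → ℝ)}
    (hU : ∀ x ∈ U, x ≠ 0 → 0 < x ⬝ᵥ (A *ᵥ x)) : finrank ℝ U ≤ posEig A := by
  have h := (-A).finrank_add_finrank_le_of_neg_of_nonneg (U := U)
    (fun x hx hx0 => by simpa [neg_mulVec] using hU x hx hx0)
    fun x hx => by
      simpa [neg_mulVec] using hA.dotProduct_mulVec_nonpos (p := fun t => ¬ 0 < t)
        (fun _ => le_of_not_gt) hx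
  rw [hA.finrank_eigenvectorSpan, Fintype.card_subtype_compl] at h
  have := Fintype.card_subtype_le fun i => 0 < hA.eigenvalues i
  rw [hA.posEig_eq]
  omega

theorem exists_finrank_eq_negEig : ∃ W : Submodule ℝ (m → ℝ), finrank ℝ W = negEig A ∧
    ∀ x ∈ W, x ≠ 0 → x ⬝ᵥ (A *ᵥ x) < 0 :=
  ⟨_, (hA.finrank_eigenvectorSpan _).trans hA.negEig_eq.symm,
    fun _ => hA.dotProduct_mulVec_neg fun _ => id⟩

theorem exists_finrank_eq_posEig : ∃ W : Submodule ℝ (m → ℝ), finrank ℝ W = posEig A ∧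
    ∀ x ∈ W, x ≠ 0 → 0 < x ⬝ᵥ (A *ᵥ x) :=
  ⟨_, (hA.finrank_eigenvectorSpan _).trans hA.posEig_eq.symm,
    fun _ => hA.dotProduct_mulVec_pos fun _ => id⟩

theorem negEig_add_posEig_add_finrank_ker :
    negEig A + posEig A + finrank ℝ (LinearMap.ker A.mulVecLin) = Fintype.card m := by
  have hsign := Fintype.card_subtype_or_disjoint (fun i => hA.eigenvalues i < 0)
    (fun i => 0 < hA.eigenvalues i) (disjoint_iff_inf_le.mpr fun _ h => h.1.not_gt h.2)
  have hrank := A.mulVecLin.finrank_range_add_finrank_ker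
  rw [← Matrix.rank, hA.rank_eq_card_non_zero_eigs, finrank_fintype_fun_eq_card] at hrank
  rw [Fintype.card_congr (Equiv.subtypeEquivRight fun _ => ne_iff_lt_or_gt), hsign] at hrank
  rw [hA.negEig_eq, hA.posEig_eq, hrank]

end IsHermitian
end Matrix

theorem Matrix.dotProduct_mulVec_mul_of_mulVec_eq_zero {n : Type*} [Fintype n]
    {B : Matrix n n ℝ} (hB : B.IsSymm) {ψ : n → ℝ} (hψ : B *ᵥ ψ = 0) (θ : n → ℝ) :
    (ψ * θ) ⬝ᵥ (B *ᵥ (ψ * θ)) = -(∑ r, ∑ s, B r s * ψ r * ψ s * (θ r - θ s) ^ 2) / 2 := by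
  have h₁ : ∑ r, ∑ s, B r s * ψ r * ψ s * θ r ^ 2 = 0 := by
    simp only [fun r s => show B r s * ψ r * ψ s * θ r ^ 2 = ψ r * θ r ^ 2 * (B r s * ψ s) by
      ring, ← Finset.mul_sum]
    simp [fun r => show ∑ s, B r s * ψ s = 0 from congrFun hψ r]
  have h₂ : ∑ r, ∑ s, B r s * ψ r * ψ s * θ s ^ 2 = 0 := by
    rw [Finset.sum_comm, ← h₁]
    exact Finset.sum_congr rfl fun r _ => Finset.sum_congr rfl fun s _ => by rw [hB.apply]; ring
  have hQ : (ψ * θ) ⬝ᵥ (B *ᵥ (ψ * θ)) = ∑ r, ∑ s, B r s * ψ r * ψ s * (θ r * θ s) := by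
    simp only [dotProduct, mulVec, Pi.mul_apply, Finset.mul_sum]
    exact Finset.sum_congr rfl fun r _ => Finset.sum_congr rfl fun s _ => by ring
  have hexpand : ∑ r, ∑ s, B r s * ψ r * ψ s * (θ r - θ s) ^ 2 =
      ∑ r, ∑ s, B r s * ψ r * ψ s * θ r ^ 2 + ∑ r, ∑ s, B r s * ψ r * ψ s * θ s ^ 2 -
        2 * ∑ r, ∑ s, B r s * ψ r * ψ s * (θ r * θ s) := by
    simp only [Finset.mul_sum, ← Finset.sum_add_distrib, ← Finset.sum_sub_distrib]
    exact Finset.sum_congr rfl fun r _ => Finset.sum_congr rfl fun s _ => by ring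
  rw [hexpand, h₁, h₂, hQ]
  ring

namespace Matrix
variable {m n k : Type*} [Fintype m] [Fintype n] [Fintype k]

theorem sumElim_dotProduct_fromBlocks_mulVec (Φ : Matrix m m ℝ) (C : Matrix m k ℝ) (u : m → ℝ)
    (z : k → ℝ) : Sum.elim u z ⬝ᵥ (fromBlocks Φ C Cᵀ 0 *ᵥ Sum.elim u z) =
      u ⬝ᵥ (Φ *ᵥ u) + 2 * ((C *ᵥ z) ⬝ᵥ u) := by
  rw [fromBlocks_mulVec, sumElim_dotProduct_sumElim]
  simp only [Sum.elim_comp_inl, Sum.elim_comp_inr, zero_mulVec, add_zero, dotProduct_add,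
    dotProduct_mulVec z, vecMul_transpose, dotProduct_comm u (C *ᵥ z)]
  ring

theorem IsSymm.dotProduct_mulVec_comm {Φ : Matrix m m ℝ} (hΦ : Φ.IsSymm) (u v : m → ℝ) :
    u ⬝ᵥ (Φ *ᵥ v) = v ⬝ᵥ (Φ *ᵥ u) := by
  rw [dotProduct_mulVec, ← mulVec_transpose, hΦ.eq, dotProduct_comm]

variable [DecidableEq k]

noncomputable def saddleLift (Φ : Matrix m m ℝ) (C : Matrix m k ℝ) (K : Matrix m n ℝ) (x : n → ℝ)
    (w : k → ℝ) : m ⊕ k → ℝ :=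
  Sum.elim (K *ᵥ x + C *ᵥ w) (-((Cᵀ * C)⁻¹ *ᵥ (Cᵀ *ᵥ (Φ *ᵥ (K *ᵥ x + (2⁻¹ : ℝ) • C *ᵥ w)))) - w)

theorem saddleLift_dotProduct_fromBlocks_mulVec {Φ : Matrix m m ℝ} (hΦ : Φ.IsSymm)
    {C : Matrix m k ℝ} (hC : IsUnit (Cᵀ * C).det) {K : Matrix m n ℝ} (hCK : Cᵀ * K = 0)
    (x : n → ℝ) (w : k → ℝ) :
    saddleLift Φ C K x w ⬝ᵥ (fromBlocks Φ C Cᵀ 0 *ᵥ saddleLift Φ C K x w) =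
      (K *ᵥ x) ⬝ᵥ (Φ *ᵥ (K *ᵥ x)) - 2 * ((C *ᵥ w) ⬝ᵥ (C *ᵥ w)) := by
  rw [saddleLift, sumElim_dotProduct_fromBlocks_mulVec]
  set a := K *ᵥ x
  set c := C *ᵥ w
  set y := Cᵀ *ᵥ (Φ *ᵥ (a + (2⁻¹ : ℝ) • c))
  set Γ := Cᵀ * C
  have hCa : Cᵀ *ᵥ a = 0 := by rw [mulVec_mulVec, hCK, zero_mulVec]
  have hCc : Cᵀ *ᵥ c = Γ *ᵥ w := mulVec_mulVec _ _ _
  have hinv : (Γ⁻¹ *ᵥ y) ⬝ᵥ (Γ *ᵥ w) = (Φ *ᵥ (a + (2⁻¹ : ℝ) • c)) ⬝ᵥ c := by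
    rw [← dotProduct_transpose_mulVec, transpose_mul, transpose_transpose, mulVec_mulVec,
      mul_nonsing_inv _ hC, one_mulVec, dotProduct_transpose_mulVec]
  have hcross : (C *ᵥ (-(Γ⁻¹ *ᵥ y) - w)) ⬝ᵥ (a + c) =
      -((Φ *ᵥ (a + (2⁻¹ : ℝ) • c)) ⬝ᵥ c) - c ⬝ᵥ c := by
    rw [dotProduct_comm, ← dotProduct_transpose_mulVec, mulVec_add, hCa, zero_add, hCc,
      sub_dotProduct, neg_dotProduct, hinv, ← hCc, dotProduct_transpose_mulVec]
  rw [hcross]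
  simp only [mulVec_add, mulVec_smul, dotProduct_add, add_dotProduct, smul_dotProduct,
    smul_eq_mul, hΦ.dotProduct_mulVec_comm a c, dotProduct_comm (Φ *ᵥ _) c]
  ring

theorem exists_finrank_eq_neg_fromBlocks {Φ : Matrix m m ℝ} (hΦ : Φ.IsSymm) {C : Matrix m k ℝ}
    (hC : LinearMap.ker C.mulVecLin = ⊥) {K : Matrix m n ℝ} (hCK : Cᵀ * K = 0)
    {W : Submodule ℝ (n → ℝ)} (hW : ∀ x ∈ W, x ≠ 0 → (K *ᵥ x) ⬝ᵥ (Φ *ᵥ (K *ᵥ x)) < 0) :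
    ∃ U : Submodule ℝ (m ⊕ k → ℝ), finrank ℝ U = finrank ℝ W + Fintype.card k ∧
      ∀ v ∈ U, v ≠ 0 → v ⬝ᵥ (fromBlocks Φ C Cᵀ 0 *ᵥ v) < 0 := by
  have hΓ : IsUnit (Cᵀ * C).det := (isUnit_iff_isUnit_det _).mp <| mulVec_injective_iff_isUnit.mp <|
    LinearMap.ker_eq_bot.mp ((ker_mulVecLin_transpose_mul_self C).trans hC)
  let L : W × (k → ℝ) →ₗ[ℝ] (m ⊕ k → ℝ) :=
    { toFun := fun p => saddleLift Φ C K p.1 p.2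
      map_add' := fun p q => by
        ext (i | i) <;> simp [saddleLift, mulVec_add, smul_add] <;> abel
      map_smul' := fun t p => by
        ext (i | i) <;> simp [saddleLift, mulVec_add, mulVec_smul, smul_smul] <;> ring }
  have hneg (p : W × (k → ℝ)) (hp : p ≠ 0) : L p ⬝ᵥ (fromBlocks Φ C Cᵀ 0 *ᵥ L p) < 0 := by
    obtain ⟨⟨x, hxW⟩, w⟩ := p
    have hCw : 0 ≤ (C *ᵥ w) ⬝ᵥ (C *ᵥ w) := by simpa using dotProduct_self_star_nonneg (C *ᵥ w)
    refine (saddleLift_dotProduct_fromBlocks_mulVec hΦ hΓ hCK x w).trans_lt ?_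
    by_cases hx : x = 0
    · subst hx
      have hw : C *ᵥ w ≠ 0 := fun h => hp (by
        simpa using LinearMap.ker_eq_bot.mp hC (h.trans (mulVec_zero C).symm))
      have := dotProduct_self_star_pos_iff.mpr hw
      simp only [star_trivial] at this
      simp [this]
    · linarith [hW x hxW hx]
  refine ⟨LinearMap.range L, ?_, ?_⟩
  · have hL : Function.Injective L := (injective_iff_map_eq_zero L).mpr fun p hp =>
      by_contra fun h => (hneg p h).ne (by simp [hp])
    rw [LinearMap.finrank_range_of_inj hL, finrank_prod, finrank_fintype_fun_eq_card]
  · rintro _ ⟨p, rfl⟩ hp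
    exact hneg p (by rintro rfl; exact hp (map_zero L))

theorem exists_finrank_eq_pos_fromBlocks {Φ : Matrix m m ℝ} (hΦ : Φ.IsSymm) {C : Matrix m k ℝ}
    (hC : LinearMap.ker C.mulVecLin = ⊥) {K : Matrix m n ℝ} (hCK : Cᵀ * K = 0)
    {W : Submodule ℝ (n → ℝ)} (hW : ∀ x ∈ W, x ≠ 0 → 0 < (K *ᵥ x) ⬝ᵥ (Φ *ᵥ (K *ᵥ x))) :
    ∃ U : Submodule ℝ (m ⊕ k → ℝ), finrank ℝ U = finrank ℝ W + Fintype.card k ∧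
      ∀ v ∈ U, v ≠ 0 → 0 < v ⬝ᵥ (fromBlocks Φ C Cᵀ 0 *ᵥ v) := by
  have hnegC : (-C).mulVecLin = -C.mulVecLin := LinearMap.ext fun _ => neg_mulVec _ _
  obtain ⟨U, hU, hneg⟩ := exists_finrank_eq_neg_fromBlocks (Φ := -Φ) (C := -C) (K := K) (W := W)
    (by simpa [IsSymm] using hΦ.eq) (by rw [hnegC, LinearMap.ker_neg, hC])
    (by simp [hCK]) fun x hx hx0 => by simpa [neg_mulVec] using hW x hx hx0
  have hM : fromBlocks (-Φ) (-C) (-C)ᵀ 0 = -fromBlocks Φ C Cᵀ 0 := by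
    rw [fromBlocks_neg, transpose_neg, neg_zero]
  refine ⟨U, hU, fun v hv hv0 => ?_⟩
  have := hneg v hv hv0
  rwa [hM, neg_mulVec, dotProduct_neg, neg_lt_zero] at this

variable [DecidableEq m] [DecidableEq n] {Φ : Matrix m m ℝ} {C : Matrix m k ℝ} {K : Matrix m n ℝ}
  {B : Matrix n n ℝ}

theorem negEig_add_card_le_negEig_fromBlocks (hΦ : Φ.IsSymm) (hC : LinearMap.ker C.mulVecLin = ⊥)
    (hCK : Cᵀ * K = 0) (hB : B.IsHermitian)
    (hK : ∀ x, (K *ᵥ x) ⬝ᵥ (Φ *ᵥ (K *ᵥ x)) = x ⬝ᵥ (B *ᵥ x)) :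
    negEig B + Fintype.card k ≤ negEig (fromBlocks Φ C Cᵀ 0) := by
  obtain ⟨W, hW, hWneg⟩ := hB.exists_finrank_eq_negEig
  obtain ⟨U, hU, hUneg⟩ := exists_finrank_eq_neg_fromBlocks hΦ hC hCK
    fun x hx hx0 => (hK x).trans_lt (hWneg x hx hx0)
  rw [← hW, ← hU]
  exact (isHermitian_iff_isSymm.mpr (hΦ.fromBlocks rfl isSymm_zero)).finrank_le_negEig hUneg

theorem posEig_add_card_le_posEig_fromBlocks (hΦ : Φ.IsSymm) (hC : LinearMap.ker C.mulVecLin = ⊥)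
    (hCK : Cᵀ * K = 0) (hB : B.IsHermitian)
    (hK : ∀ x, (K *ᵥ x) ⬝ᵥ (Φ *ᵥ (K *ᵥ x)) = x ⬝ᵥ (B *ᵥ x)) :
    posEig B + Fintype.card k ≤ posEig (fromBlocks Φ C Cᵀ 0) := by
  obtain ⟨W, hW, hWpos⟩ := hB.exists_finrank_eq_posEig
  obtain ⟨U, hU, hUpos⟩ := exists_finrank_eq_pos_fromBlocks hΦ hC hCK
    fun x hx hx0 => (hWpos x hx hx0).trans_eq (hK x).symm
  rw [← hW, ← hU]
  exact (isHermitian_iff_isSymm.mpr (hΦ.fromBlocks rfl isSymm_zero)).finrank_le_posEig hUpos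

end Matrix

namespace OrientedGraph
variable {V E : Type*} (G : OrientedGraph V E)

theorem endpoints_injective :
    Function.Injective (Sum.elim (fun e => (G.src e, G.tgt e)) fun e => (G.tgt e, G.src e)) := by
  rintro (e | e) (f | f) h <;> simp only [Sum.elim_inl, Sum.elim_inr, Prod.mk.injEq] at h
  · rw [G.edgeInj e f (.inl h)]
  · cases G.edgeInj e f (.inr h)
    exact absurd h.1 (G.loopless e)
  · cases G.edgeInj e f (.inr h.symm)
    exact absurd h.2 (G.loopless e)
  · rw [G.edgeInj e f (.inl h.symm)]

theorem sum_sum_eq_sum_edges [Fintype V] [Fintype E] (f : V → V → ℝ)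
    (hf : ∀ r s, ¬ G.toSimpleGraph.Adj r s → f r s = 0) :
    ∑ r, ∑ s, f r s = ∑ e, (f (G.src e) (G.tgt e) + f (G.tgt e) (G.src e)) := by
  set g := Sum.elim (fun e => (G.src e, G.tgt e)) fun e => (G.tgt e, G.src e)
  calc ∑ r, ∑ s, f r s = ∑ p : V × V, f p.1 p.2 := (Fintype.sum_prod_type' f).symm
    _ = ∑ x : E ⊕ E, f (g x).1 (g x).2 := by
      refine (Finset.sum_of_injOn g G.endpoints_injective.injOn (by simp [Set.MapsTo])
        (fun p _ hp => hf _ _ ?_) fun _ _ => rfl).symm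
      rintro ⟨e, he | he⟩
      · exact hp ⟨.inl e, by simp, by simp [g, he.1, he.2]⟩
      · exact hp ⟨.inr e, by simp, by simp [g, he.1, he.2]⟩
    _ = _ := by rw [Fintype.sum_sum_type, ← Finset.sum_add_distrib]; rfl

section Cob
variable [Fintype V] [DecidableEq V]

theorem cob_mulVec_apply (θ : V → ℝ) (e : E) : (G.cob *ᵥ θ) e = θ (G.tgt e) - θ (G.src e) := by
  simp [cob, mulVec, dotProduct, sub_mul, Finset.sum_sub_distrib]

theorem ker_cob (hconn : G.toSimpleGraph.Connected) :
    LinearMap.ker G.cob.mulVecLin = ℝ ∙ (1 : V → ℝ) := by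
  ext θ
  simp only [LinearMap.mem_ker, mulVecLin_apply, Submodule.mem_span_singleton]
  constructor
  · intro h
    have hadj : ∀ r s, G.toSimpleGraph.Adj r s → θ r = θ s := by
      rintro r s ⟨e, ⟨rfl, rfl⟩ | ⟨rfl, rfl⟩⟩ <;>
        linarith [G.cob_mulVec_apply θ e, congrFun h e, Pi.zero_apply (M := fun _ => ℝ) e]
    obtain ⟨r₀⟩ := hconn.nonempty
    refine ⟨θ r₀, funext fun r => ?_⟩
    suffices θ r = θ r₀ by simp [this]
    obtain ⟨w⟩ := hconn.preconnected r r₀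
    induction w with
    | nil => rfl
    | cons hrs _ ih => exact (hadj _ _ hrs).trans ih
  · rintro ⟨c, rfl⟩
    ext e
    simp [cob_mulVec_apply]

theorem finrank_cycleSpace_add_card [Fintype E] (hconn : G.toSimpleGraph.Connected) :
    finrank ℝ G.cycleSpace + Fintype.card V = Fintype.card E + 1 := by
  have := hconn.nonempty
  have hd := G.cob.mulVecLin.finrank_range_add_finrank_ker
  have hdt := G.cobᵀ.mulVecLin.finrank_range_add_finrank_ker
  rw [G.ker_cob hconn, finrank_span_singleton one_ne_zero, ← rank,
    finrank_fintype_fun_eq_card] at hd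
  rw [← rank, rank_transpose, finrank_fintype_fun_eq_card] at hdt
  rw [cycleSpace]
  omega

end Cob
end OrientedGraph

namespace IsFrame
variable {V E : Type*} [Fintype V] [Fintype E] [DecidableEq V] {G : OrientedGraph V E} {β : ℕ}
  {C : Matrix E (Fin β) ℝ}

theorem finrank_cycleSpace (hC : IsFrame G C) : finrank ℝ G.cycleSpace = β := by
  rw [← hC.2, LinearMap.finrank_range_of_inj (LinearMap.ker_eq_bot.mp hC.1)]
  simp

theorem transpose_mul_cob (hC : IsFrame G C) : Cᵀ * G.cob = 0 := by
  rw [← transpose_eq_zero, transpose_mul, transpose_transpose]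
  ext v j
  have hj : C *ᵥ Pi.single j 1 ∈ G.cycleSpace := hC.2 ▸ LinearMap.mem_range_self _ _
  have := LinearMap.mem_ker.mp hj
  rw [mulVecLin_apply, mulVec_mulVec, mulVec_single_one] at this
  exact congrFun this v

end IsFrame

theorem OrientedGraph.cob_dotProduct_PhiMat_mulVec_cob {V E : Type*} [Fintype V] [Fintype E]
    [DecidableEq V] [DecidableEq E] (G : OrientedGraph V E) {H : Matrix V V ℝ} (hsymm : H.IsSymm)
    (hsupp : G.Support H) {lam : ℝ} {ψ : V → ℝ} (heig : H *ᵥ ψ = lam • ψ) (θ : V → ℝ) :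
    (G.cob *ᵥ θ) ⬝ᵥ (PhiMat G H ψ *ᵥ (G.cob *ᵥ θ)) =
      (ψ * θ) ⬝ᵥ ((H - lam • (1 : Matrix V V ℝ)) *ᵥ (ψ * θ)) := by
  set B := H - lam • (1 : Matrix V V ℝ)
  have hB : B.IsSymm := hsymm.sub (isSymm_one.smul lam)
  have hBψ : B *ᵥ ψ = 0 := by simp [B, sub_mulVec, heig, smul_mulVec]
  have hoff (r s : V) (hrs : r ≠ s) : B r s = H r s := by simp [B, one_apply_ne hrs]
  have hedges : ∑ e, (B (G.src e) (G.tgt e) * ψ (G.src e) * ψ (G.tgt e) *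
        (θ (G.src e) - θ (G.tgt e)) ^ 2 + B (G.tgt e) (G.src e) * ψ (G.tgt e) * ψ (G.src e) *
        (θ (G.tgt e) - θ (G.src e)) ^ 2) =
      -2 * ((G.cob *ᵥ θ) ⬝ᵥ (PhiMat G H ψ *ᵥ (G.cob *ᵥ θ))) := by
    simp only [dotProduct, PhiMat, mulVec_diagonal, cob_mulVec_apply, Finset.mul_sum]
    refine Finset.sum_congr rfl fun e _ => ?_
    rw [hoff _ _ (G.loopless e), hoff _ _ (G.loopless e).symm, hsymm.apply]
    ring
  rw [Matrix.dotProduct_mulVec_mul_of_mulVec_eq_zero hB hBψ,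
    G.sum_sum_eq_sum_edges _ fun r s hrs => ?_, hedges]
  · ring
  · by_cases h : r = s
    · simp [h]
    · simp [hoff r s h, not_not.mp (mt (hsupp r s h) hrs)]

theorem OrientedGraph.cob_mul_diagonal_inv_dotProduct_PhiMat_mulVec {V E : Type*} [Fintype V]
    [Fintype E] [DecidableEq V] [DecidableEq E] (G : OrientedGraph V E) {H : Matrix V V ℝ}
    (hsymm : H.IsSymm) (hsupp : G.Support H) {lam : ℝ} {ψ : V → ℝ} (heig : H *ᵥ ψ = lam • ψ)
    (hψ : ∀ r, ψ r ≠ 0) (x : V → ℝ) :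
    ((G.cob * diagonal ψ⁻¹) *ᵥ x) ⬝ᵥ (PhiMat G H ψ *ᵥ ((G.cob * diagonal ψ⁻¹) *ᵥ x)) =
      x ⬝ᵥ ((H - lam • (1 : Matrix V V ℝ)) *ᵥ x) := by
  have hdiag : diagonal ψ⁻¹ *ᵥ x = ψ⁻¹ * x := funext fun r => mulVec_diagonal _ _ r
  have hx : ψ * (ψ⁻¹ * x) = x := funext fun r => mul_inv_cancel_left₀ (hψ r) _
  rw [← mulVec_mulVec, hdiag, G.cob_dotProduct_PhiMat_mulVec_cob hsymm hsupp heig, hx]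

/-- for the block matrix `M = [[Φ, C],[Cᵀ, 0]]`, `n₋(M) = n₋(H-λI) + β`. -/
theorem block_matrix_neg_index
    {V E : Type*} [Fintype V] [Fintype E] [DecidableEq V] [DecidableEq E]
    (G : OrientedGraph V E) (hconn : G.toSimpleGraph.Connected)
    (H : Matrix V V ℝ) (hsymm : H.IsSymm) (hsupp : G.StrictSupport H)
    (lam : ℝ) (ψ : V → ℝ) (heig : H.mulVec ψ = lam • ψ)
    (hker : Module.finrank ℝ (LinearMap.ker (H - lam • (1 : Matrix V V ℝ)).mulVecLin) = 1)
    (hψ : ∀ r, ψ r ≠ 0)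
    {β : ℕ} (C : Matrix E (Fin β) ℝ) (hC : IsFrame G C) :
    negEig (Matrix.fromBlocks (PhiMat G H ψ) C Cᵀ (0 : Matrix (Fin β) (Fin β) ℝ)) =
      negEig (H - lam • (1 : Matrix V V ℝ)) + β := by
  have hΦ : (PhiMat G H ψ).IsSymm := isSymm_diagonal _
  have hB : (H - lam • (1 : Matrix V V ℝ)).IsHermitian :=
    isHermitian_iff_isSymm.mpr (hsymm.sub (isSymm_one.smul lam))
  have hM : (fromBlocks (PhiMat G H ψ) C Cᵀ (0 : Matrix (Fin β) (Fin β) ℝ)).IsHermitian :=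
    isHermitian_iff_isSymm.mpr (hΦ.fromBlocks rfl isSymm_zero)
  have hK := G.cob_mul_diagonal_inv_dotProduct_PhiMat_mulVec hsymm
    (fun r s hrs => (hsupp r s hrs).mp) heig hψ
  have hCK : Cᵀ * (G.cob * diagonal ψ⁻¹) = 0 := by
    rw [← Matrix.mul_assoc, hC.transpose_mul_cob, Matrix.zero_mul]
  have hneg := negEig_add_card_le_negEig_fromBlocks hΦ hC.1 hCK hB hK
  have hpos := posEig_add_card_le_posEig_fromBlocks hΦ hC.1 hCK hB hK
  have hMcount := hM.negEig_add_posEig_add_finrank_ker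
  have hBcount := hB.negEig_add_posEig_add_finrank_ker
  have hcycle := G.finrank_cycleSpace_add_card hconn
  rw [Fintype.card_fin] at hneg hpos
  rw [Fintype.card_sum, Fintype.card_fin] at hMcount
  rw [hker] at hBcount
  rw [hC.finrank_cycleSpace] at hcycle
  omega
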